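/- Let D be an infinite set of positive integers. Let P be a finite set of points in ℝ² with pairwise distinct x-coordinates and let 𝓡 be a finite family of axis-parallel rectangles whose y-projections form a nested family. Then there exist a finite set V of integers, a bijection g : P → V, and for each R ∈ 𝓡 a finite arithmetic progression A_R whose difference belongs to D, such that for every R ∈ 𝓡 the image g(P ∩ R) equals A_R ∩ V. -/

import Mathlib

/-- The axis-parallel rectangle `[x₁,x₂] × [y₁,y₂]` encoded by the quadruple
`(x₁, x₂, y₁, y₂)`. -/
def rectSet (r : ℝ × ℝ × ℝ × ℝ) : Set (ℝ × ℝ) :=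
  Set.Icc r.1 r.2.1 ×ˢ Set.Icc r.2.2.1 r.2.2.2

/-- The `y`-projection `[y₁,y₂]` of the rectangle encoded by `(x₁, x₂, y₁, y₂)`. -/
def yProj (r : ℝ × ℝ × ℝ × ℝ) : Set ℝ := Set.Icc r.2.2.1 r.2.2.2

/-- The finite arithmetic progression `{b, b + d, …, b + (m-1)d}`. -/
def AP (b d : ℤ) (m : ℕ) : Set ℤ := {x | ∃ i : ℕ, i < m ∧ x = b + i * d}

/-!
Sort the rectangles by decreasing height, so that every `y`-projection `Iⱼ` is contained in,
or disjoint from, each earlier one. Choose differences `d₀, d₁, … ∈ D` so fast growing that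
`Qⱼ = d₀ ⋯ dⱼ₋₁` exceeds `∑_{i<j} Qᵢ` and `dⱼ` exceeds `∑_{i≤j} Qᵢ`, and send a point `p` to
`rank_x(p) · Qₖ + ∑ {Qⱼ | p_y ∈ Iⱼ}`. Modulo `dⱼ` only the digits `i ≤ j` survive; by laminarity
they are the same for all points of the strip `ℝ × Iⱼ`, and they reach `Qⱼ` exactly on that
strip. So the strip is a residue class modulo `dⱼ`, and as the code increases with `x`, the
points of rectangle `j` are the points of that class between the codes of its leftmost and
rightmost points: an arithmetic progression of difference `dⱼ` intersected with `V`.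
-/

open Finset

theorem Set.Icc_subset_Icc_of_subset_of_sub_le {a b c d : ℝ} (h : Set.Icc c d ⊆ Set.Icc a b)
    (hcd : c ≤ d) (hlen : b - a ≤ d - c) : Set.Icc a b ⊆ Set.Icc c d := by
  obtain ⟨hac, hdb⟩ := (Set.Icc_subset_Icc_iff hcd).mp h
  exact Set.Icc_subset_Icc (by linarith) (by linarith)

theorem yProj_subset_or_disjoint_of_height_le {r s : ℝ × ℝ × ℝ × ℝ}
    (hnest : yProj r ⊆ yProj s ∨ yProj s ⊆ yProj r ∨ yProj r ∩ yProj s = ∅)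
    (hlen : r.2.2.2 - r.2.2.1 ≤ s.2.2.2 - s.2.2.1) :
    yProj r ⊆ yProj s ∨ Disjoint (yProj r) (yProj s) := by
  rcases hnest with h | h | h
  · exact .inl h
  · by_cases hs : s.2.2.1 ≤ s.2.2.2
    · exact .inl (Set.Icc_subset_Icc_of_subset_of_sub_le h hs hlen)
    · rw [yProj, yProj, Set.Icc_eq_empty hs]
      exact .inr (Set.disjoint_empty _)
  · exact .inr (Set.disjoint_iff_inter_eq_empty.mpr h)

theorem exists_enum_yProj_laminar (𝓡 : Finset (ℝ × ℝ × ℝ × ℝ))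
    (hnest : ∀ r ∈ 𝓡, ∀ r' ∈ 𝓡,
      yProj r ⊆ yProj r' ∨ yProj r' ⊆ yProj r ∨ yProj r ∩ yProj r' = ∅) :
    ∃ (k : ℕ) (e : ℕ → ℝ × ℝ × ℝ × ℝ), (∀ r ∈ 𝓡, ∃ j < k, e j = r) ∧
      ∀ i j, i < j → j < k → yProj (e j) ⊆ yProj (e i) ∨ Disjoint (yProj (e j)) (yProj (e i)) := by
  set height : ℝ × ℝ × ℝ × ℝ → ℝ := fun r => r.2.2.2 - r.2.2.1
  set L := 𝓡.toList.mergeSort fun r s => decide (height s ≤ height r)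
  have hmem : ∀ r, r ∈ L ↔ r ∈ 𝓡 := fun r => (List.mergeSort_perm _ _).mem_iff.trans mem_toList
  have hsorted : L.Pairwise fun r s => height s ≤ height r := by
    simpa using List.pairwise_mergeSort (le := fun r s => decide (height s ≤ height r))
      (fun r s t hrs hst => by simp only [decide_eq_true_eq] at *; linarith)
      (fun r s => by simpa using le_total _ _) 𝓡.toList
  have hlam : L.Pairwise fun r s => yProj s ⊆ yProj r ∨ Disjoint (yProj s) (yProj r) :=
    hsorted.imp_of_mem fun hr hs hrs =>
      yProj_subset_or_disjoint_of_height_le (hnest _ ((hmem _).mp hs) _ ((hmem _).mp hr)) hrs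
  refine ⟨L.length, fun j => L.getD j default, fun r hr => ?_, fun i j hij hj => ?_⟩
  · obtain ⟨j, hj, rfl⟩ := List.mem_iff_getElem.mp ((hmem r).mpr hr)
    exact ⟨j, hj, List.getD_eq_getElem _ _ hj⟩
  · simp only [List.getD_eq_getElem _ _ hj, List.getD_eq_getElem _ _ (hij.trans hj)]
    exact List.pairwise_iff_getElem.mp hlam i j _ hj hij

section Digits

variable {Q d : ℕ → ℕ}

theorem sum_lt_of_subset_range (hQ : ∀ j, ∑ i ∈ range j, Q i < Q j) {S : Finset ℕ} {j : ℕ}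
    (hS : S ⊆ range j) : ∑ i ∈ S, Q i < Q j :=
  (sum_le_sum_of_subset hS).trans_lt (hQ j)

theorem mul_add_sum_mod_eq (hdvd : ∀ i j, i < j → d i ∣ Q j)
    (hd : ∀ j, ∑ i ∈ range (j + 1), Q i < d j) (S : Finset ℕ) {j k : ℕ} (hj : j < k) (m : ℕ) :
    (m * Q k + ∑ i ∈ S, Q i) % d j = ∑ i ∈ S with i ≤ j, Q i := by
  have hhigh : d j ∣ ∑ i ∈ S with ¬i ≤ j, Q i :=
    dvd_sum fun i hi => hdvd j i (not_le.mp (mem_filter.mp hi).2)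
  have hlow : ∑ i ∈ S with i ≤ j, Q i < d j :=
    (sum_le_sum_of_subset fun i hi =>
      mem_range.mpr (Nat.lt_succ_of_le (mem_filter.mp hi).2)).trans_lt (hd j)
  obtain ⟨t, ht⟩ := dvd_add hhigh ((hdvd j k hj).mul_left m)
  rw [← sum_filter_add_sum_filter_not S (· ≤ j), add_comm, add_assoc, ht,
    Nat.add_mul_mod_self_left, Nat.mod_eq_of_lt hlow]

theorem mem_iff_le_sum_filter_le (hQ : ∀ j, ∑ i ∈ range j, Q i < Q j) (S : Finset ℕ) (j : ℕ) :
    j ∈ S ↔ Q j ≤ ∑ i ∈ S with i ≤ j, Q i := by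
  refine ⟨fun hj => single_le_sum (fun _ _ => Nat.zero_le _) (mem_filter.mpr ⟨hj, le_rfl⟩),
    fun hle => ?_⟩
  by_contra hj
  refine hle.not_gt (sum_lt_of_subset_range hQ fun i hi => ?_)
  obtain ⟨hiS, hij⟩ := mem_filter.mp hi
  exact mem_range.mpr (hij.lt_of_ne fun h => hj (h ▸ hiS))

end Digits

theorem Set.Infinite.exists_superincreasing {D : Set ℕ} (hD : D.Infinite) :
    ∃ Q d : ℕ → ℕ, (∀ j, d j ∈ D) ∧ (∀ i j, i < j → d i ∣ Q j) ∧
      (∀ j, ∑ i ∈ Finset.range j, Q i < Q j) ∧ ∀ j, ∑ i ∈ Finset.range (j + 1), Q i < d j := by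
  choose f hfD hf using hD.exists_gt
  set Q : ℕ → ℕ := fun j => (fun q => q * f (2 * q))^[j] 1
  have hQsucc : ∀ j, Q (j + 1) = Q j * f (2 * Q j) := fun j => Function.iterate_succ_apply' _ _ _
  have hQ : ∀ j, ∑ i ∈ Finset.range j, Q i < Q j := by
    intro j
    induction j with
    | zero => simp [Q]
    | succ j ih =>
      rw [sum_range_succ, hQsucc]
      have h2 : 2 ≤ f (2 * Q j) := by have := hf (2 * Q j); omega
      calc ∑ i ∈ Finset.range j, Q i + Q j < Q j * 2 := by omega
        _ ≤ Q j * f (2 * Q j) := Nat.mul_le_mul_left _ h2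
  refine ⟨Q, fun j => f (2 * Q j), fun j => hfD _, fun i j hij => ?_, hQ, fun j => ?_⟩
  · induction j, hij using Nat.le_induction with
    | base => exact Dvd.intro_left _ (hQsucc i).symm
    | succ j _ ih => exact ih.trans (Dvd.intro _ (hQsucc j).symm)
  · rw [sum_range_succ]
    linarith [hQ j, hf (2 * Q j)]

section Laminar

variable {α : Type*} {I : ℕ → Set α} {k : ℕ}

theorem mem_iff_mem_of_laminar (hI : ∀ i j, i < j → j < k → I j ⊆ I i ∨ Disjoint (I j) (I i))
    {i j : ℕ} (hij : i ≤ j) (hj : j < k) {p q : α} (hp : p ∈ I j) (hq : q ∈ I j) :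
    p ∈ I i ↔ q ∈ I i := by
  rcases hij.eq_or_lt with rfl | hij
  · exact iff_of_true hp hq
  rcases hI i j hij hj with hsub | hdisj
  · exact iff_of_true (hsub hp) (hsub hq)
  · exact iff_of_false (Set.disjoint_left.mp hdisj hp) (Set.disjoint_left.mp hdisj hq)

theorem exists_code_modEq_iff_mem {D : Set ℕ} (hD : D.Infinite) (ρ : α → ℕ)
    (hI : ∀ i j, i < j → j < k → I j ⊆ I i ∨ Disjoint (I j) (I i)) :
    ∃ (g : α → ℕ) (d : ℕ → ℕ), (∀ j, d j ∈ D ∧ 0 < d j) ∧ (∀ p q, ρ p < ρ q → g p < g q) ∧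
      ∀ j < k, ∀ p q, p ∈ I j → (g q ≡ g p [MOD d j] ↔ q ∈ I j) := by
  classical
  obtain ⟨Q, d, hdD, hdvd, hQ, hd⟩ := hD.exists_superincreasing
  set S : α → Finset ℕ := fun p => {i ∈ range k | p ∈ I i}
  refine ⟨fun p => ρ p * Q k + ∑ i ∈ S p, Q i, d, fun j => ⟨hdD j, (Nat.zero_le _).trans_lt (hd j)⟩,
    fun p q hpq => ?_, fun j hj p q hp => ?_⟩
  · have : ∑ i ∈ S p, Q i < Q k := sum_lt_of_subset_range hQ (filter_subset _ _)
    calc ρ p * Q k + ∑ i ∈ S p, Q i < (ρ p + 1) * Q k := by rw [add_mul, one_mul]; omega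
      _ ≤ ρ q * Q k := Nat.mul_le_mul_right _ hpq
      _ ≤ _ := Nat.le_add_right _ _
  have hmem : ∀ r, r ∈ I j ↔ j ∈ S r := fun r => by simp [S, hj]
  rw [Nat.ModEq, mul_add_sum_mod_eq hdvd hd _ hj, mul_add_sum_mod_eq hdvd hd _ hj]
  constructor
  · intro h
    rw [hmem, mem_iff_le_sum_filter_le hQ, h]
    exact (mem_iff_le_sum_filter_le hQ _ _).mp ((hmem p).mp hp)
  · intro hq
    congr 1
    ext i
    simp only [S, mem_filter, mem_range]
    constructor
    · rintro ⟨⟨hik, hqi⟩, hij⟩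
      exact ⟨⟨hik, (mem_iff_mem_of_laminar hI hij hj hp hq).mpr hqi⟩, hij⟩
    · rintro ⟨⟨hik, hpi⟩, hij⟩
      exact ⟨⟨hik, (mem_iff_mem_of_laminar hI hij hj hp hq).mp hpi⟩, hij⟩

end Laminar

theorem mem_AP_iff {b M d v : ℤ} (hd : 0 < d) (hbM : b ≤ M) (hdvd : d ∣ M - b) :
    v ∈ AP b d (((M - b) / d).toNat + 1) ↔ b ≤ v ∧ v ≤ M ∧ v ≡ b [ZMOD d] := by
  obtain ⟨s, hs⟩ := hdvd
  have hs0 : 0 ≤ s := nonneg_of_mul_nonneg_right (hs ▸ sub_nonneg.mpr hbM) hd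
  rw [hs, Int.mul_ediv_cancel_left _ hd.ne']
  constructor
  · rintro ⟨i, hi, rfl⟩
    have : (i : ℤ) ≤ s := by omega
    refine ⟨by nlinarith, by nlinarith, ?_⟩
    simp [Int.ModEq]
  · rintro ⟨hbv, hvM, hvb⟩
    obtain ⟨t, ht⟩ := hvb.symm.dvd
    have ht0 : 0 ≤ t := nonneg_of_mul_nonneg_right (ht ▸ sub_nonneg.mpr hbv) hd
    have hts : t ≤ s := le_of_mul_le_mul_left (by linarith) hd
    exact ⟨t.toNat, by omega, by rw [Int.toNat_of_nonneg ht0]; linarith⟩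

theorem eq_AP_inter {T V : Set ℤ} {b M d : ℤ} (hd : 0 < d) (hM : M ∈ T)
    (hTV : T ⊆ V) (hT : ∀ t ∈ T, b ≤ t ∧ t ≤ M ∧ t ≡ b [ZMOD d])
    (hV : ∀ v ∈ V, b ≤ v → v ≤ M → v ≡ b [ZMOD d] → v ∈ T) :
    T = AP b d (((M - b) / d).toNat + 1) ∩ V := by
  obtain ⟨hbM, -, hMb⟩ := hT M hM
  ext v
  rw [Set.mem_inter_iff, mem_AP_iff hd hbM hMb.symm.dvd]
  exact ⟨fun hv => ⟨hT v hv, hTV hv⟩, fun ⟨⟨hbv, hvM, hvb⟩, hv⟩ => hV v hv hbv hvM hvb⟩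

theorem exists_image_inter_eq_AP_inter {α : Type*} {P : Finset α} {g : α → ℤ} {x : α → ℝ}
    {S : Set α} {a b : ℝ} {d : ℤ} (hd : 0 < d) (hg : ∀ p, 0 ≤ g p)
    (hmono : ∀ p ∈ P, ∀ q ∈ P, x p < x q → g p < g q)
    (hS : ∀ p ∈ S, ∀ q, g q ≡ g p [ZMOD d] ↔ q ∈ S) :
    ∃ c n, g '' (↑P ∩ (x ⁻¹' Set.Icc a b ∩ S)) = AP c d (n + 1) ∩ g '' ↑P := by
  classical
  set T : Finset α := {p ∈ P | x p ∈ Set.Icc a b ∧ p ∈ S}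
  have hT : (↑P ∩ (x ⁻¹' Set.Icc a b ∩ S) : Set α) = ↑T := by ext; simp [T]
  rw [hT]
  rcases T.eq_empty_or_nonempty with hempty | hne
  · refine ⟨-1, 0, ?_⟩
    rw [hempty, coe_empty, Set.image_empty, eq_comm, Set.eq_empty_iff_forall_notMem]
    rintro v ⟨⟨i, hi, rfl⟩, ⟨p, -, hp⟩⟩
    obtain rfl : i = 0 := by omega
    simp only [Nat.cast_zero, zero_mul, add_zero] at hp
    linarith [hg p]
  obtain ⟨p₀, hp₀, hmin⟩ := T.exists_min_image g hne
  obtain ⟨p₁, hp₁, hmax⟩ := T.exists_max_image g hne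
  obtain ⟨hp₀P, hp₀x, hp₀S⟩ := mem_filter.mp hp₀
  obtain ⟨hp₁P, hp₁x, -⟩ := mem_filter.mp hp₁
  refine ⟨g p₀, ((g p₁ - g p₀) / d).toNat, eq_AP_inter hd (Set.mem_image_of_mem g hp₁)
    (Set.image_mono (coe_subset.mpr (filter_subset _ _))) ?_ ?_⟩
  · rintro _ ⟨q, hq, rfl⟩
    exact ⟨hmin q hq, hmax q hq, (hS p₀ hp₀S q).mpr (mem_filter.mp hq).2.2⟩
  · rintro _ ⟨q, hqP, rfl⟩ hlo hhi hmod
    refine Set.mem_image_of_mem g (mem_filter.mpr ⟨hqP, ⟨?_, ?_⟩, (hS p₀ hp₀S q).mp hmod⟩)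
    · exact hp₀x.1.trans (not_lt.mp fun h => (hmono q hqP p₀ hp₀P h).not_ge hlo)
    · exact (not_lt.mp fun h => (hmono p₁ hp₁P q hqP h).not_ge hhi).trans hp₁x.2

theorem card_filter_lt_lt_card_filter_lt {α β : Type*} [LinearOrder β] {s : Finset α} {f : α → β}
    {a b : α} (ha : a ∈ s) (hab : f a < f b) : #{x ∈ s | f x < f a} < #{x ∈ s | f x < f b} := by
  refine card_lt_card ((ssubset_iff_of_subset fun x hx => ?_).mpr ⟨a, mem_filter.mpr ⟨ha, hab⟩, ?_⟩)
  · rw [mem_filter] at hx ⊢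
    exact ⟨hx.1, hx.2.trans hab⟩
  · simp

theorem statement5_general (D : Set ℕ) (hD : D.Infinite)
    (P : Finset (ℝ × ℝ))
    (hP : ∀ p ∈ P, ∀ q ∈ P, p.1 = q.1 → p = q)
    (𝓡 : Finset (ℝ × ℝ × ℝ × ℝ))
    (hnest : ∀ r ∈ 𝓡, ∀ r' ∈ 𝓡,
      yProj r ⊆ yProj r' ∨ yProj r' ⊆ yProj r ∨ yProj r ∩ yProj r' = ∅) :
    ∃ (V : Finset ℤ) (g : ℝ × ℝ → ℤ) (A : ℝ × ℝ × ℝ × ℝ → ℤ × ℕ × ℕ),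
      Set.BijOn g (P : Set (ℝ × ℝ)) (V : Set ℤ) ∧
      (∀ r ∈ 𝓡, (A r).2.1 ∈ D ∧ 1 ≤ (A r).2.2) ∧
      ∀ r ∈ 𝓡, g '' ((P : Set (ℝ × ℝ)) ∩ rectSet r) =
        AP (A r).1 ((A r).2.1 : ℤ) (A r).2.2 ∩ (V : Set ℤ) := by
  obtain ⟨k, e, he𝓡, he⟩ := exists_enum_yProj_laminar 𝓡 hnest
  obtain ⟨g, d, hd, hgmono, hgmod⟩ := exists_code_modEq_iff_mem hD
    (fun p : ℝ × ℝ => #{q ∈ P | q.1 < p.1}) (I := fun j => Prod.snd ⁻¹' yProj (e j))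
    fun i j hij hj => (he i j hij hj).imp (Set.preimage_mono ·) (·.preimage _)
  set G : ℝ × ℝ → ℤ := fun p => g p
  have hGmono : ∀ p ∈ P, ∀ q ∈ P, p.1 < q.1 → G p < G q := fun p hp _ _ h =>
    Int.ofNat_lt.mpr (hgmono _ _ (card_filter_lt_lt_card_filter_lt hp h))
  have hA : ∀ r ∈ 𝓡, ∃ a : ℤ × ℕ × ℕ, (a.2.1 ∈ D ∧ 1 ≤ a.2.2) ∧
      G '' (↑P ∩ rectSet r) = AP a.1 a.2.1 a.2.2 ∩ G '' ↑P := by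
    intro r hr
    obtain ⟨j, hj, rfl⟩ := he𝓡 r hr
    obtain ⟨c, n, h⟩ := exists_image_inter_eq_AP_inter (Int.natCast_pos.mpr (hd j).2)
      (fun p => Int.natCast_nonneg _) hGmono
      fun p hp q => Int.natCast_modEq_iff.trans (hgmod j hj p q hp)
    exact ⟨(c, d j, n + 1), ⟨(hd j).1, Nat.le_add_left 1 n⟩, h⟩
  choose! A hAD hA using hA
  refine ⟨P.image G, G, A, ?_, hAD, fun r hr => by rw [coe_image]; exact hA r hr⟩
  rw [coe_image]
  refine Set.InjOn.bijOn_image fun p hp q hq hpq => ?_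
  by_contra hne
  rcases lt_or_gt_of_ne (mt (hP p hp q hq) hne) with h | h
  · exact (hGmono p hp q hq h).ne hpq
  · exact (hGmono q hq p hp h).ne' hpq

/-- Let `D` be an infinite set of positive integers.  Any finite planar point set `P`
with pairwise distinct `x`-coordinates, together with a finite family `𝓡` of
axis-parallel rectangles whose `y`-projections form a nested family, can be realized by a
finite set `V ⊆ ℤ` and finite arithmetic progressions whose differences belong to `D`:
there are a bijection `g : P → V` and for each `r ∈ 𝓡` a progression (with base
`(A r).1`, difference `(A r).2.1 ∈ D` and length `(A r).2.2`) such that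
`g '' (P ∩ r) = A_r ∩ V`. -/
theorem statement5 (D : Set ℕ) (hD : D.Infinite) (hDpos : ∀ d ∈ D, 0 < d)
    (P : Finset (ℝ × ℝ))
    (hP : ∀ p ∈ P, ∀ q ∈ P, p.1 = q.1 → p = q)
    (𝓡 : Finset (ℝ × ℝ × ℝ × ℝ))
    (hord : ∀ r ∈ 𝓡, r.1 ≤ r.2.1 ∧ r.2.2.1 ≤ r.2.2.2)
    (hnest : ∀ r ∈ 𝓡, ∀ r' ∈ 𝓡,
      yProj r ⊆ yProj r' ∨ yProj r' ⊆ yProj r ∨ yProj r ∩ yProj r' = ∅) :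
    ∃ (V : Finset ℤ) (g : ℝ × ℝ → ℤ) (A : ℝ × ℝ × ℝ × ℝ → ℤ × ℕ × ℕ),
      Set.BijOn g (P : Set (ℝ × ℝ)) (V : Set ℤ) ∧
      (∀ r ∈ 𝓡, (A r).2.1 ∈ D ∧ 1 ≤ (A r).2.2) ∧
      ∀ r ∈ 𝓡, g '' ((P : Set (ℝ × ℝ)) ∩ rectSet r) =
        AP (A r).1 ((A r).2.1 : ℤ) (A r).2.2 ∩ (V : Set ℤ) :=
  statement5_general D hD P hP 𝓡 hnest
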